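/- arXiv:2004.00751 — 5 statements merged into one kernel-verified Lean document; each statement's English description precedes it below -/
import Mathlib

section
/- Let D be an Arrow's single-peaked domain on a finite set A with |A| ≥ 2. Then D has at most two terminal elements. Moreover, if D is a maximal Arrow's single-peaked domain on A, then D has exactly two terminal elements. -/
/-- A list `l` represents a linear order on the finite set `A`:
it is duplicate-free and its members are exactly the elements of `A`,
listed from most to least preferred. -/
def IsLinOrd {α : Type*} (A : Finset α) (l : List α) : Prop :=
  l.Nodup ∧ ∀ a : α, a ∈ l ↔ a ∈ A

/-- The restriction of the order `l` to the subset `S`. -/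
def restrictList {α : Type*} [DecidableEq α] (l : List α) (S : Finset α) : List α :=
  l.filter (fun a => a ∈ S)

/-- The domain contraction of `D` on `S`: the set of restrictions to `S`
of the orders in `D` (as a set, so duplicates are automatically removed). -/
def contraction {α : Type*} [DecidableEq α] (D : Set (List α)) (S : Finset α) :
    Set (List α) :=
  (fun l => restrictList l S) '' D

/-- `D` contains a Condorcet triple: elements `a, b, c` and orders
`v₁, v₂, v₃ ∈ D` restricting on `{a,b,c}` to `a≻b≻c`, `b≻c≻a`, `c≻a≻b`. -/
def CondorcetTriple {α : Type*} [DecidableEq α] (D : Set (List α)) : Prop :=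
  ∃ a b c : α, a ≠ b ∧ a ≠ c ∧ b ≠ c ∧
    ∃ v₁ ∈ D, ∃ v₂ ∈ D, ∃ v₃ ∈ D,
      restrictList v₁ {a, b, c} = [a, b, c] ∧
      restrictList v₂ {a, b, c} = [b, c, a] ∧
      restrictList v₃ {a, b, c} = [c, a, b]

/-- A Condorcet domain on `A`: a set of linear orders on `A` with no Condorcet triple. -/
def IsCondorcetDomain {α : Type*} [DecidableEq α] (A : Finset α) (D : Set (List α)) : Prop :=
  (∀ l ∈ D, IsLinOrd A l) ∧ ¬ CondorcetTriple D

/-- A maximal Condorcet domain on `A`: no strict superset is a Condorcet domain on `A`. -/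
def IsMaxCondorcetDomain {α : Type*} [DecidableEq α] (A : Finset α) (D : Set (List α)) : Prop :=
  IsCondorcetDomain A D ∧ ∀ D' : Set (List α), IsCondorcetDomain A D' → D ⊆ D' → D' = D

/-- `x` is a never-bottom element of the triple `T` for `D`:
no order of `D` ranks `x` below both other elements of `T`. -/
def NeverBottom {α : Type*} [DecidableEq α] (D : Set (List α)) (T : Finset α) (x : α) : Prop :=
  x ∈ T ∧ ∀ l ∈ D, (restrictList l T).getLast? ≠ some x

/-- An Arrow's single-peaked domain on `A`: a Condorcet domain such that every
3-element subset of `A` has a never-bottom element. -/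
def IsArrowSP {α : Type*} [DecidableEq α] (A : Finset α) (D : Set (List α)) : Prop :=
  IsCondorcetDomain A D ∧
    ∀ T : Finset α, T ⊆ A → T.card = 3 → ∃ x : α, NeverBottom D T x

/-- A maximal Arrow's single-peaked domain on `A`. -/
def IsMaxArrowSP {α : Type*} [DecidableEq α] (A : Finset α) (D : Set (List α)) : Prop :=
  IsMaxCondorcetDomain A D ∧ IsArrowSP A D

/-- `a` is a terminal element of `D`: some order of `D` ends with (least element) `a`. -/
def TerminalElt {α : Type*} (D : Set (List α)) (a : α) : Prop :=
  ∃ l ∈ D, l.getLast? = some a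

/-- `l` is an extremal order of `D`: `l ∈ D`, and the first and last elements of `l`
are the two terminal elements of `D`. -/
def IsExtremal {α : Type*} (D : Set (List α)) (l : List α) : Prop :=
  l ∈ D ∧ ∃ s t : α, s ≠ t ∧ l.head? = some s ∧ l.getLast? = some t ∧
    TerminalElt D s ∧ TerminalElt D t ∧ ∀ a : α, TerminalElt D a → a = s ∨ a = t

/-- The position of `a` in the order `l`, the first element being in position 1. -/
def posIn {α : Type*} [DecidableEq α] (l : List α) (a : α) : ℕ :=
  l.idxOf a + 1

/-!
Three distinct terminal elements `a, b, c` are impossible: each of them is the last element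
of some order of `D`, hence of its restriction to `{a, b, c}`, so the triple has no never-bottom
element.

For a maximal Condorcet domain, suppose all orders of `D` ended with the same element `t`, and
let `l₀ ++ [s, t] ∈ D`. The order `l₀ ++ [t, s]` can then be added to `D` without creating a
Condorcet triple: on a triple containing `s` and `t` all orders end with `s` or `t`, whereas the
three orders of a Condorcet triple have three different last elements; on any other triple it
restricts like `l₀ ++ [s, t]`. This contradicts maximality.
-/

theorem List.exists_eq_append_pair {α : Type*} {l : List α} (h : 2 ≤ l.length) :
    ∃ l₀ s t, l = l₀ ++ [s, t] := by
  obtain rfl | ⟨l', t, rfl⟩ := l.eq_nil_or_concat'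
  · simp at h
  obtain rfl | ⟨l₀, s, rfl⟩ := l'.eq_nil_or_concat'
  · simp at h
  exact ⟨l₀, s, t, by simp⟩

theorem IsLinOrd.length {α : Type*} {A : Finset α} {l : List α} (h : IsLinOrd A l) :
    l.length = A.card := by
  classical
  rw [← List.toFinset_card_of_nodup h.1]
  congr 1
  ext a
  simp [h.2 a]

theorem IsLinOrd.of_perm {α : Type*} {A : Finset α} {l l' : List α} (h : IsLinOrd A l)
    (hp : l'.Perm l) : IsLinOrd A l' :=
  ⟨hp.nodup_iff.mpr h.1, fun a => hp.mem_iff.trans (h.2 a)⟩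

theorem TerminalElt.mem {α : Type*} {A : Finset α} {D : Set (List α)}
    (hD : ∀ l ∈ D, IsLinOrd A l) {a : α} (ha : TerminalElt D a) : a ∈ A := by
  obtain ⟨l, hl, hlast⟩ := ha
  exact ((hD l hl).2 a).1 (List.mem_of_getLast? hlast)

section

variable {α : Type*} [DecidableEq α]

theorem getLast?_restrictList {l : List α} {a : α} {T : Finset α} (hl : l.getLast? = some a)
    (ha : a ∈ T) : (restrictList l T).getLast? = some a := by
  obtain ⟨l', rfl⟩ := List.getLast?_eq_some_iff.mp hl
  simp [restrictList, List.filter_append, ha]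

theorem restrictList_append_pair_swap (l₀ : List α) {s t : α} {T : Finset α}
    (h : s ∉ T ∨ t ∉ T) :
    restrictList (l₀ ++ [t, s]) T = restrictList (l₀ ++ [s, t]) T := by
  rcases h with h | h <;> simp [restrictList, List.filter_append, List.filter_cons, h]

theorem not_condorcetTriple_singleton (l : List α) : ¬ CondorcetTriple {l} := by
  rintro ⟨a, b, c, hab, -, -, v₁, rfl, v₂, rfl, -, -, r₁, r₂, -⟩
  rw [r₁] at r₂
  exact hab (List.cons.inj r₂).1

theorem IsArrowSP.terminalElt_eq_or_eq {A : Finset α} {D : Set (List α)} (hD : IsArrowSP A D)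
    {s t a : α} (hst : s ≠ t) (hs : TerminalElt D s) (ht : TerminalElt D t)
    (ha : TerminalElt D a) : a = s ∨ a = t := by
  by_contra! h
  have hT : ({s, t, a} : Finset α) ⊆ A := by
    simp only [Finset.insert_subset_iff, Finset.singleton_subset_iff]
    exact ⟨hs.mem hD.1.1, ht.mem hD.1.1, ha.mem hD.1.1⟩
  obtain ⟨x, hx, hnever⟩ :=
    hD.2 _ hT (Finset.card_eq_three.mpr ⟨s, t, a, hst, h.1.symm, h.2.symm, rfl⟩)
  obtain ⟨l, hl, hlast⟩ : TerminalElt D x := by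
    simp only [Finset.mem_insert, Finset.mem_singleton] at hx
    rcases hx with rfl | rfl | rfl <;> assumption
  exact hnever l hl (getLast?_restrictList hlast hx)

theorem IsArrowSP.exists_forall_terminalElt_eq_or_eq [Nonempty α] {A : Finset α}
    {D : Set (List α)} (hD : IsArrowSP A D) :
    ∃ s t : α, ∀ a : α, TerminalElt D a → a = s ∨ a = t := by
  by_cases h : ∃ s t, s ≠ t ∧ TerminalElt D s ∧ TerminalElt D t
  · obtain ⟨s, t, hst, hs, ht⟩ := h
    exact ⟨s, t, fun a => hD.terminalElt_eq_or_eq hst hs ht⟩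
  push Not at h
  by_cases hs : ∃ s, TerminalElt D s
  · obtain ⟨s, hs⟩ := hs
    exact ⟨s, s, fun a ha => Or.inl (by_contra fun has => h a s has ha hs)⟩
  · obtain ⟨x⟩ := ‹Nonempty α›
    exact ⟨x, x, fun a ha => (hs ⟨a, ha⟩).elim⟩

theorem IsMaxCondorcetDomain.nonempty {A : Finset α} {D : Set (List α)}
    (hmax : IsMaxCondorcetDomain A D) : D.Nonempty := by
  rw [Set.nonempty_iff_ne_empty]
  rintro rfl
  have hsingle : IsCondorcetDomain A {A.toList} :=
    ⟨by rintro _ rfl; exact ⟨A.nodup_toList, fun _ => Finset.mem_toList⟩,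
      not_condorcetTriple_singleton _⟩
  exact Set.singleton_ne_empty _ (hmax.2 _ hsingle (Set.empty_subset _))

theorem not_condorcetTriple_insert_swap {D : Set (List α)} (hD : ¬ CondorcetTriple D)
    {l₀ : List α} {s t : α} (hl : l₀ ++ [s, t] ∈ D)
    (hbot : ∀ v ∈ D, v.getLast? = some t) :
    ¬ CondorcetTriple (insert (l₀ ++ [t, s]) D) := by
  rintro ⟨a, b, c, hab, hac, hbc, v₁, hv₁, v₂, hv₂, v₃, hv₃, r₁, r₂, r₃⟩
  by_cases hst : s ∈ ({a, b, c} : Finset α) ∧ t ∈ ({a, b, c} : Finset α)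
  · have hlast : ∀ v ∈ insert (l₀ ++ [t, s]) D, ∀ x,
        (restrictList v {a, b, c}).getLast? = some x → x = s ∨ x = t := by
      rintro v (rfl | hv) x hx
      · rw [getLast?_restrictList (by simp) hst.1] at hx
        exact Or.inl (Option.some.inj hx).symm
      · rw [getLast?_restrictList (hbot v hv) hst.2] at hx
        exact Or.inr (Option.some.inj hx).symm
    have hc := hlast v₁ hv₁ c (by rw [r₁]; rfl)
    have ha := hlast v₂ hv₂ a (by rw [r₂]; rfl)
    have hb := hlast v₃ hv₃ b (by rw [r₃]; rfl)
    rcases ha with rfl | rfl <;> rcases hb with rfl | rfl <;> rcases hc with rfl | rfl <;>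
      contradiction
  · have hlift : ∀ v ∈ insert (l₀ ++ [t, s]) D,
        ∃ w ∈ D, restrictList w {a, b, c} = restrictList v {a, b, c} := by
      rintro v (rfl | hv)
      · exact ⟨_, hl, (restrictList_append_pair_swap l₀ (not_and_or.mp hst)).symm⟩
      · exact ⟨v, hv, rfl⟩
    obtain ⟨w₁, hw₁, e₁⟩ := hlift v₁ hv₁
    obtain ⟨w₂, hw₂, e₂⟩ := hlift v₂ hv₂
    obtain ⟨w₃, hw₃, e₃⟩ := hlift v₃ hv₃
    exact hD ⟨a, b, c, hab, hac, hbc, w₁, hw₁, w₂, hw₂, w₃, hw₃,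
      e₁.trans r₁, e₂.trans r₂, e₃.trans r₃⟩

theorem IsMaxCondorcetDomain.exists_terminalElt_ne {A : Finset α} {D : Set (List α)}
    (hmax : IsMaxCondorcetDomain A D) (hA : 2 ≤ A.card) :
    ∃ s t, s ≠ t ∧ TerminalElt D s ∧ TerminalElt D t := by
  obtain ⟨l, hl⟩ := hmax.nonempty
  have hlin := hmax.1.1 l hl
  obtain ⟨l₀, s, t, rfl⟩ := List.exists_eq_append_pair (hlin.length ▸ hA)
  have ht : TerminalElt D t := ⟨_, hl, by simp⟩
  by_contra! hone
  have hbot : ∀ v ∈ D, v.getLast? = some t := by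
    intro v hv
    obtain ⟨v₀, x, y, rfl⟩ := List.exists_eq_append_pair ((hmax.1.1 v hv).length ▸ hA)
    obtain rfl : y = t := by_contra fun hyt => hone y t hyt ⟨_, hv, by simp⟩ ht
    simp
  have hst : s ≠ t := by simpa using (List.nodup_append.mp hlin.1).2.1
  have hswap : IsCondorcetDomain A (insert (l₀ ++ [t, s]) D) :=
    ⟨Set.forall_mem_insert.mpr ⟨hlin.of_perm (List.perm_append_left_iff _ |>.mpr (.swap _ _ _)),
      hmax.1.1⟩, not_condorcetTriple_insert_swap hmax.1.2 hl hbot⟩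
  have hnew : l₀ ++ [t, s] ∉ D := fun h => hst (by simpa using hbot _ h)
  exact hnew (hmax.2 _ hswap (Set.subset_insert _ _) ▸ Set.mem_insert _ _)

end

/-- An Arrow's single-peaked domain on a set `A` with `|A| ≥ 2` has at most two
terminal elements; if moreover it is maximal, it has exactly two. -/
theorem stmt_0 {α : Type*} [DecidableEq α] (A : Finset α) (hA : 2 ≤ A.card)
    (D : Set (List α)) (hD : IsArrowSP A D) :
    (∃ s t : α, ∀ a : α, TerminalElt D a → a = s ∨ a = t) ∧
    (IsMaxArrowSP A D →
      ∃ s t : α, s ≠ t ∧ TerminalElt D s ∧ TerminalElt D t ∧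
        ∀ a : α, TerminalElt D a → a = s ∨ a = t) := by
  obtain ⟨x₀, -⟩ : A.Nonempty := Finset.card_pos.mp (by omega)
  have : Nonempty α := ⟨x₀⟩
  refine ⟨hD.exists_forall_terminalElt_eq_or_eq, fun hmax => ?_⟩
  obtain ⟨s, t, hst, hs, ht⟩ := hmax.1.exists_terminalElt_ne hA
  exact ⟨s, t, hst, hs, ht, fun a => hD.terminalElt_eq_or_eq hst hs ht⟩
end

section
/- Any maximal Arrow's single-peaked domain on a set of size m ≥ 2 contains exactly 2^(m-1) linear orders, and among these there are two extremal orders (one beginning at each of the two terminal elements and ending at the other). -/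
/-!
A maximal Arrow's single-peaked domain `D` has exactly two terminal elements `s ≠ t`: three would
form a triple without a never-bottom element, and a single one is ruled out by swapping the last two
entries of an order.
Moving a terminal element `t` to the bottom of an order of `D` keeps it in `D`, and the orders of
`D` ending in `t`, with `t` removed, form a maximal Arrow's single-peaked domain on `A \ {t}`.
Hence `D` is the disjoint union of two such truncations, which gives `|D| = 2 ^ (m - 1)` by
induction; and appending `t` to an order of the truncation at `t` that starts with `s` gives an
extremal order from `s` to `t`.
-/

section

variable {α : Type*}

section Lists

variable [DecidableEq α] {l : List α} {S : Finset α} {t : α}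

theorem getLast?_restrictList_s1 (hl : l.getLast? = some t) (ht : t ∈ S) :
    (restrictList l S).getLast? = some t := by
  obtain ⟨u, rfl⟩ := List.getLast?_eq_some_iff.mp hl
  simp [restrictList, List.filter_append, ht]

theorem restrictList_append_singleton_of_notMem (ht : t ∉ S) :
    restrictList (l ++ [t]) S = restrictList l S := by
  simp [restrictList, List.filter_append, ht]

theorem restrictList_erase_of_notMem (ht : t ∉ S) :
    restrictList (l.erase t) S = restrictList l S := by
  simp only [restrictList]
  rw [← List.erase_filter, List.erase_of_not_mem (by simp [ht])]

theorem getLast?_erase_of_ne {s : α} (hl : l.getLast? = some s) (hst : s ≠ t) :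
    (l.erase t).getLast? = some s := by
  obtain ⟨u, rfl⟩ := List.getLast?_eq_some_iff.mp hl
  by_cases h : t ∈ u <;> simp [List.erase_append, h, hst]

end Lists

section LinearOrders

variable {A : Finset α} {l : List α} {t : α}

theorem isLinOrd_iff_perm : IsLinOrd A l ↔ l.Perm A.toList :=
  ⟨fun h => (List.perm_ext_iff_of_nodup h.1 A.nodup_toList).mpr
      fun a => by rw [h.2, Finset.mem_toList],
    fun h => ⟨h.nodup_iff.mpr A.nodup_toList, fun a => by rw [h.mem_iff, Finset.mem_toList]⟩⟩

theorem IsLinOrd.length_eq (hl : IsLinOrd A l) : l.length = A.card := by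
  rw [(isLinOrd_iff_perm.mp hl).length_eq, Finset.length_toList]

theorem IsLinOrd.ne_nil (hl : IsLinOrd A l) (hA : A.Nonempty) : l ≠ [] := by
  rintro rfl
  exact hA.ne_empty (Finset.card_eq_zero.mp hl.length_eq.symm)

theorem IsLinOrd.perm {l' : List α} (hl : IsLinOrd A l) (h : l.Perm l') : IsLinOrd A l' :=
  isLinOrd_iff_perm.mpr (h.symm.trans (isLinOrd_iff_perm.mp hl))

theorem finite_setOf_isLinOrd (A : Finset α) : {l : List α | IsLinOrd A l}.Finite :=
  (List.finite_toSet A.toList.permutations).subset fun _ hl =>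
    List.mem_permutations.mpr (isLinOrd_iff_perm.mp hl)

variable [DecidableEq α]

theorem isLinOrd_append_singleton_iff :
    IsLinOrd A (l ++ [t]) ↔ t ∈ A ∧ IsLinOrd (A.erase t) l := by
  simp only [IsLinOrd, List.nodup_append, List.nodup_singleton, List.mem_append,
    List.mem_singleton, Finset.mem_erase]
  constructor
  · rintro ⟨⟨hl, -, htl⟩, hmem⟩
    refine ⟨(hmem t).mp (Or.inr rfl), hl, fun a => ⟨fun ha => ?_, fun ha => ?_⟩⟩
    · exact ⟨htl a ha t rfl, (hmem a).mp (Or.inl ha)⟩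
    · exact ((hmem a).mpr ha.2).resolve_right ha.1
  · rintro ⟨htA, hl, hmem⟩
    refine ⟨⟨hl, trivial, fun a ha b hb => hb ▸ ((hmem a).mp ha).1⟩, fun a => ?_⟩
    by_cases hat : a = t
    · simp [hat, htA]
    · simp [hat, hmem]

theorem IsLinOrd.erase_append (hl : IsLinOrd A l) (ht : t ∈ A) :
    IsLinOrd A (l.erase t ++ [t]) :=
  isLinOrd_append_singleton_iff.mpr ⟨ht, hl.1.erase t, fun a => by
    rw [hl.1.mem_erase_iff, Finset.mem_erase, hl.2]⟩

end LinearOrders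

def truncation (D : Set (List α)) (t : α) : Set (List α) := {l | l ++ [t] ∈ D}

theorem mem_image_truncation {D : Set (List α)} {l : List α} {t : α} (hl : l ∈ D)
    (hlt : l.getLast? = some t) : l ∈ (· ++ [t]) '' truncation D t := by
  obtain ⟨u, rfl⟩ := List.getLast?_eq_some_iff.mp hlt
  exact ⟨u, hl, rfl⟩

variable [DecidableEq α]

structure IsCondorcetCycle (a b c : α) (v₁ v₂ v₃ : List α) : Prop where
  ne_ab : a ≠ b
  ne_ac : a ≠ c
  ne_bc : b ≠ c
  restrict_first : restrictList v₁ {a, b, c} = [a, b, c]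
  restrict_second : restrictList v₂ {a, b, c} = [b, c, a]
  restrict_third : restrictList v₃ {a, b, c} = [c, a, b]

theorem condorcetTriple_iff {D : Set (List α)} :
    CondorcetTriple D ↔
      ∃ a b c, ∃ v₁ ∈ D, ∃ v₂ ∈ D, ∃ v₃ ∈ D, IsCondorcetCycle a b c v₁ v₂ v₃ := by
  constructor
  · rintro ⟨a, b, c, hab, hac, hbc, v₁, h₁, v₂, h₂, v₃, h₃, r₁, r₂, r₃⟩
    exact ⟨a, b, c, v₁, h₁, v₂, h₂, v₃, h₃, hab, hac, hbc, r₁, r₂, r₃⟩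
  · rintro ⟨a, b, c, v₁, h₁, v₂, h₂, v₃, h₃, hab, hac, hbc, r₁, r₂, r₃⟩
    exact ⟨a, b, c, hab, hac, hbc, v₁, h₁, v₂, h₂, v₃, h₃, r₁, r₂, r₃⟩

namespace IsCondorcetCycle

variable {a b c : α} {v₁ v₂ v₃ : List α}

theorem rotate (h : IsCondorcetCycle a b c v₁ v₂ v₃) : IsCondorcetCycle b c a v₂ v₃ v₁ := by
  have hT : ({b, c, a} : Finset α) = {a, b, c} := by
    ext x
    simp only [Finset.mem_insert, Finset.mem_singleton]
    tauto
  refine ⟨h.ne_bc, h.ne_ab.symm, h.ne_ac.symm, ?_, ?_, ?_⟩ <;> rw [hT]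
  exacts [h.restrict_second, h.restrict_third, h.restrict_first]

theorem first_ne_second (h : IsCondorcetCycle a b c v₁ v₂ v₃) : v₁ ≠ v₂ := by
  rintro rfl
  exact h.ne_ab (List.cons.inj (h.restrict_first.symm.trans h.restrict_second)).1

theorem first_ne_third (h : IsCondorcetCycle a b c v₁ v₂ v₃) : v₁ ≠ v₃ :=
  h.rotate.rotate.first_ne_second.symm

theorem congr {v₁' v₂' v₃' : List α} (h : IsCondorcetCycle a b c v₁ v₂ v₃)
    (h₁ : restrictList v₁' {a, b, c} = restrictList v₁ {a, b, c})
    (h₂ : restrictList v₂' {a, b, c} = restrictList v₂ {a, b, c})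
    (h₃ : restrictList v₃' {a, b, c} = restrictList v₃ {a, b, c}) :
    IsCondorcetCycle a b c v₁' v₂' v₃' :=
  ⟨h.ne_ab, h.ne_ac, h.ne_bc, h₁.trans h.restrict_first, h₂.trans h.restrict_second,
    h₃.trans h.restrict_third⟩

theorem card_eq (h : IsCondorcetCycle a b c v₁ v₂ v₃) : ({a, b, c} : Finset α).card = 3 :=
  Finset.card_eq_three.mpr ⟨a, b, c, h.ne_ab, h.ne_ac, h.ne_bc, rfl⟩

theorem subset {A : Finset α} (h : IsCondorcetCycle a b c v₁ v₂ v₃) (hv : IsLinOrd A v₁) :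
    ({a, b, c} : Finset α) ⊆ A := fun x hx => by
  have : x ∈ restrictList v₁ {a, b, c} := by
    rw [h.restrict_first]
    simpa using hx
  exact (hv.2 x).mp (List.mem_filter.mp this).1

theorem eq_of_neverBottom {D : Set (List α)} {x : α} (h : IsCondorcetCycle a b c v₁ v₂ v₃)
    (hv₂ : v₂ ∈ D) (hv₃ : v₃ ∈ D) (hx : NeverBottom D {a, b, c} x) : x = c := by
  obtain ⟨hxT, hnb⟩ := hx
  simp only [Finset.mem_insert, Finset.mem_singleton] at hxT
  rcases hxT with rfl | rfl | rfl
  · exact absurd (by rw [h.restrict_second]; rfl) (hnb v₂ hv₂)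
  · exact absurd (by rw [h.restrict_third]; rfl) (hnb v₃ hv₃)
  · rfl

end IsCondorcetCycle

section Domains

variable {A : Finset α} {D : Set (List α)} {s t : α}

theorem TerminalElt.mem_s1 (hD : IsCondorcetDomain A D) (ht : TerminalElt D t) : t ∈ A := by
  obtain ⟨l, hl, hlast⟩ := ht
  exact ((hD.1 l hl).2 t).mp (List.mem_of_mem_getLast? hlast)

theorem TerminalElt.not_neverBottom {T : Finset α} (ht : TerminalElt D t) (htT : t ∈ T) :
    ¬ NeverBottom D T t := fun hnb => by
  obtain ⟨l, hl, hlast⟩ := ht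
  exact hnb.2 l hl (getLast?_restrictList_s1 hlast htT)

theorem isCondorcetDomain_singleton {l : List α} (hl : IsLinOrd A l) :
    IsCondorcetDomain A {l} := by
  refine ⟨fun _ h => h ▸ hl, fun h => ?_⟩
  obtain ⟨a, b, c, v₁, rfl, v₂, rfl, v₃, -, hcyc⟩ := condorcetTriple_iff.mp h
  exact hcyc.first_ne_second rfl

theorem isCondorcetDomain_truncation (hD : IsCondorcetDomain A D) :
    IsCondorcetDomain (A.erase t) (truncation D t) := by
  have hlin : ∀ l ∈ truncation D t, IsLinOrd (A.erase t) l :=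
    fun l hl => (isLinOrd_append_singleton_iff.mp (hD.1 _ hl)).2
  refine ⟨hlin, fun h => hD.2 ?_⟩
  obtain ⟨a, b, c, v₁, h₁, v₂, h₂, v₃, h₃, hcyc⟩ := condorcetTriple_iff.mp h
  have htT : t ∉ ({a, b, c} : Finset α) := fun htT =>
    (Finset.mem_erase.mp (hcyc.subset (hlin v₁ h₁) htT)).1 rfl
  exact condorcetTriple_iff.mpr ⟨a, b, c, _, h₁, _, h₂, _, h₃,
    hcyc.congr (restrictList_append_singleton_of_notMem htT)
      (restrictList_append_singleton_of_notMem htT) (restrictList_append_singleton_of_notMem htT)⟩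

theorem isArrowSP_truncation (hD : IsArrowSP A D) : IsArrowSP (A.erase t) (truncation D t) := by
  refine ⟨isCondorcetDomain_truncation hD.1, fun T hT h3 => ?_⟩
  obtain ⟨x, hxT, hnb⟩ := hD.2 T (hT.trans (A.erase_subset t)) h3
  have htT : t ∉ T := fun htT => (Finset.mem_erase.mp (hT htT)).1 rfl
  exact ⟨x, hxT, fun l hl => restrictList_append_singleton_of_notMem htT ▸ hnb _ hl⟩

namespace IsMaxCondorcetDomain

theorem nonempty_s1 (hD : IsMaxCondorcetDomain A D) : D.Nonempty := by
  rw [Set.nonempty_iff_ne_empty]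
  rintro rfl
  have hl : IsLinOrd A A.toList := isLinOrd_iff_perm.mpr (List.Perm.refl _)
  exact Set.singleton_ne_empty _ (hD.2 _ (isCondorcetDomain_singleton hl) (Set.empty_subset _))

theorem exists_terminalElt (hD : IsMaxCondorcetDomain A D) (hA : A.Nonempty) :
    ∃ t, TerminalElt D t := by
  obtain ⟨l, hl⟩ := hD.nonempty_s1
  have hne := (hD.1.1 l hl).ne_nil hA
  exact ⟨l.getLast hne, l, hl, List.getLast?_eq_some_getLast hne⟩

theorem exists_cycle_of_notMem (hD : IsMaxCondorcetDomain A D) {w : List α}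
    (hw : IsLinOrd A w) (hwD : w ∉ D) :
    ∃ a b c v₂ v₃, v₂ ∈ D ∧ v₃ ∈ D ∧ IsCondorcetCycle a b c w v₂ v₃ := by
  have htriple : CondorcetTriple (insert w D) := by
    by_contra h
    have hext : IsCondorcetDomain A (insert w D) :=
      ⟨fun l hl => hl.elim (· ▸ hw) (hD.1.1 l), h⟩
    exact hwD (hD.2 _ hext (Set.subset_insert w D) ▸ Set.mem_insert w D)
  have of_first : ∀ {a b c v₂ v₃}, v₂ ∈ insert w D → v₃ ∈ insert w D →
      IsCondorcetCycle a b c w v₂ v₃ →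
      ∃ a b c v₂ v₃, v₂ ∈ D ∧ v₃ ∈ D ∧ IsCondorcetCycle a b c w v₂ v₃ :=
    fun h₂ h₃ hcyc => ⟨_, _, _, _, _, h₂.resolve_left hcyc.first_ne_second.symm,
      h₃.resolve_left hcyc.first_ne_third.symm, hcyc⟩
  obtain ⟨a, b, c, v₁, h₁, v₂, h₂, v₃, h₃, hcyc⟩ := condorcetTriple_iff.mp htriple
  rcases h₁ with rfl | h₁
  · exact of_first h₂ h₃ hcyc
  rcases h₂ with rfl | h₂
  · exact of_first h₃ (.inr h₁) hcyc.rotate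
  rcases h₃ with rfl | h₃
  · exact of_first (.inr h₁) (.inr h₂) hcyc.rotate.rotate
  exact absurd (condorcetTriple_iff.mpr ⟨a, b, c, v₁, h₁, v₂, h₂, v₃, h₃, hcyc⟩) hD.1.2

/-- If every order of `D` ended in `t`, swapping the last two entries of one of them would give an
order outside `D` whose Condorcet cycle can neither contain `t` (which ends both other orders of the
cycle) nor avoid it (it would then be a cycle of `D`). -/
theorem exists_ne_terminalElt (hD : IsMaxCondorcetDomain A D) (hA : 2 ≤ A.card)
    (ht : TerminalElt D t) : ∃ s, s ≠ t ∧ TerminalElt D s := by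
  by_contra! honly
  have hlast : ∀ v ∈ D, v.getLast? = some t := fun v hv => by
    have hne := (hD.1.1 v hv).ne_nil (Finset.card_pos.mp (by omega))
    rw [List.getLast?_eq_some_getLast hne]
    by_contra h
    exact honly _ (fun e => h (congrArg some e)) ⟨v, hv, List.getLast?_eq_some_getLast hne⟩
  obtain ⟨l, hl, hlt⟩ := ht
  obtain ⟨u', rfl⟩ := List.getLast?_eq_some_iff.mp hlt
  obtain ⟨u, p, rfl⟩ := (List.eq_nil_or_concat' u').resolve_left <| by
    rintro rfl
    have := (hD.1.1 _ hl).length_eq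
    simp only [List.nil_append, List.length_singleton] at this
    omega
  have hpt : p ≠ t := by
    rintro rfl
    simpa [List.nodup_append] using (hD.1.1 _ hl).1
  have hw : IsLinOrd A (u ++ [t, p]) :=
    (hD.1.1 _ hl).perm (by simpa using List.Perm.append_left u (List.Perm.swap t p []))
  have hwD : u ++ [t, p] ∉ D := fun h => hpt (by simpa using hlast _ h)
  obtain ⟨a, b, c, v₂, v₃, h₂, h₃, hcyc⟩ := hD.exists_cycle_of_notMem hw hwD
  by_cases htT : t ∈ ({a, b, c} : Finset α)
  · have ha := getLast?_restrictList_s1 (hlast v₂ h₂) htT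
    have hb := getLast?_restrictList_s1 (hlast v₃ h₃) htT
    rw [hcyc.restrict_second] at ha
    rw [hcyc.restrict_third] at hb
    simp only [List.getLast?_cons_cons, List.getLast?_singleton, Option.some.injEq] at ha hb
    exact hcyc.ne_ab (ha.trans hb.symm)
  · refine hD.1.2 (condorcetTriple_iff.mpr ⟨a, b, c, _, hl, v₂, h₂, v₃, h₃,
      hcyc.congr ?_ rfl rfl⟩)
    simp only [Finset.mem_insert, Finset.mem_singleton, not_or] at htT
    simp [restrictList, List.filter_append, List.filter_cons, htT]

end IsMaxCondorcetDomain

namespace IsArrowSP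

theorem eq_or_eq_of_terminalElt (hD : IsArrowSP A D) (hst : s ≠ t)
    (hs : TerminalElt D s) (ht : TerminalElt D t) {a : α} (ha : TerminalElt D a) :
    a = s ∨ a = t := by
  by_contra! h
  have hT : ({a, s, t} : Finset α) ⊆ A := by
    intro x hx
    simp only [Finset.mem_insert, Finset.mem_singleton] at hx
    rcases hx with rfl | rfl | rfl <;> exact TerminalElt.mem_s1 hD.1 ‹_›
  obtain ⟨x, hx⟩ := hD.2 _ hT (Finset.card_eq_three.mpr ⟨a, s, t, h.1, h.2, hst, rfl⟩)
  have hxT := hx.1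
  have hxt : TerminalElt D x := by
    simp only [Finset.mem_insert, Finset.mem_singleton] at hxT
    rcases hxT with rfl | rfl | rfl <;> assumption
  exact hxt.not_neverBottom hx.1 hx

theorem eq_union_image_truncation (hD : IsArrowSP A D) (hst : s ≠ t)
    (hs : TerminalElt D s) (ht : TerminalElt D t) :
    D = (· ++ [s]) '' truncation D s ∪ (· ++ [t]) '' truncation D t := by
  refine Set.Subset.antisymm (fun l hl => ?_) (Set.union_subset ?_ ?_)
  · have hne := (hD.1.1 l hl).ne_nil ⟨s, hs.mem_s1 hD.1⟩
    have hlast := List.getLast?_eq_some_getLast hne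
    rcases hD.eq_or_eq_of_terminalElt hst hs ht ⟨l, hl, hlast⟩ with h | h
    · exact .inl (mem_image_truncation hl (h ▸ hlast))
    · exact .inr (mem_image_truncation hl (h ▸ hlast))
  all_goals exact Set.image_subset_iff.mpr fun _ h => h

end IsArrowSP

namespace IsMaxArrowSP

/-- On a triple containing `t`, the order `w` puts `t` at the bottom, so a cycle through `w` on
such a triple would leave the triple without a never-bottom element. -/
theorem exists_cycle_of_notMem (hD : IsMaxArrowSP A D) (ht : TerminalElt D t) {w : List α}
    (hw : IsLinOrd A w) (hwt : w.getLast? = some t) (hwD : w ∉ D) :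
    ∃ a b c v₂ v₃, v₂ ∈ D ∧ v₃ ∈ D ∧ IsCondorcetCycle a b c w v₂ v₃ ∧
      t ∉ ({a, b, c} : Finset α) := by
  obtain ⟨a, b, c, v₂, v₃, h₂, h₃, hcyc⟩ := hD.1.exists_cycle_of_notMem hw hwD
  refine ⟨a, b, c, v₂, v₃, h₂, h₃, hcyc, fun htT => ?_⟩
  obtain ⟨x, hx⟩ := hD.2.2 _ (hcyc.subset hw) hcyc.card_eq
  have hct : c = t := by
    have h := getLast?_restrictList_s1 hwt htT
    rw [hcyc.restrict_first] at h
    simpa using h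
  exact ht.not_neverBottom htT (hct ▸ hcyc.eq_of_neverBottom h₂ h₃ hx ▸ hx)

theorem erase_append_mem (hD : IsMaxArrowSP A D) (ht : TerminalElt D t) {v : List α}
    (hv : v ∈ D) : v.erase t ++ [t] ∈ D := by
  by_contra hwD
  obtain ⟨a, b, c, v₂, v₃, h₂, h₃, hcyc, htT⟩ := hD.exists_cycle_of_notMem ht
    ((hD.1.1.1 v hv).erase_append (ht.mem_s1 hD.1.1)) List.getLast?_concat hwD
  refine hD.1.1.2 (condorcetTriple_iff.mpr ⟨a, b, c, v, hv, v₂, h₂, v₃, h₃,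
    hcyc.congr ?_ rfl rfl⟩)
  rw [restrictList_append_singleton_of_notMem htT, restrictList_erase_of_notMem htT]

theorem terminalElt_truncation (hD : IsMaxArrowSP A D) (hst : s ≠ t) (hs : TerminalElt D s)
    (ht : TerminalElt D t) : TerminalElt (truncation D t) s := by
  obtain ⟨v, hv, hvs⟩ := hs
  exact ⟨v.erase t, hD.erase_append_mem ht hv, getLast?_erase_of_ne hvs hst⟩

end IsMaxArrowSP

theorem isMaxArrowSP_truncation (hD : IsMaxArrowSP A D) (ht : TerminalElt D t) :
    IsMaxArrowSP (A.erase t) (truncation D t) := by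
  refine ⟨⟨isCondorcetDomain_truncation hD.2.1,
    fun E hE hsub => Set.Subset.antisymm (fun w hwE => ?_) hsub⟩, isArrowSP_truncation hD.2⟩
  by_contra hwD
  obtain ⟨a, b, c, v₂, v₃, h₂, h₃, hcyc, htT⟩ := hD.exists_cycle_of_notMem ht
    (isLinOrd_append_singleton_iff.mpr ⟨ht.mem_s1 hD.1.1, hE.1 w hwE⟩) List.getLast?_concat hwD
  refine hE.2 (condorcetTriple_iff.mpr ⟨a, b, c, w, hwE, _, hsub (hD.erase_append_mem ht h₂),
    _, hsub (hD.erase_append_mem ht h₃), hcyc.congr ?_ ?_ ?_⟩)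
  · exact (restrictList_append_singleton_of_notMem htT).symm
  all_goals exact restrictList_erase_of_notMem htT

namespace IsMaxArrowSP

theorem ncard_eq {n : ℕ} (hD : IsMaxArrowSP A D) (hA : A.card = n + 1) : D.ncard = 2 ^ n := by
  induction n generalizing A D with
  | zero =>
    obtain ⟨x, rfl⟩ := Finset.card_eq_one.mp hA
    have hsub : D ⊆ {[x]} := fun l hl => by
      simpa using isLinOrd_iff_perm.mp (hD.1.1.1 l hl)
    rw [hD.1.nonempty_s1.subset_singleton_iff.mp hsub, Set.ncard_singleton, pow_zero]
  | succ n ih =>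
    obtain ⟨t, ht⟩ := hD.1.exists_terminalElt (Finset.card_pos.mp (by omega))
    obtain ⟨s, hst, hs⟩ := hD.1.exists_ne_terminalElt (by omega) ht
    have hfin : D.Finite := (finite_setOf_isLinOrd A).subset hD.1.1.1
    have hcard : ∀ {u}, TerminalElt D u → (truncation D u).ncard = 2 ^ n := fun hu =>
      ih (isMaxArrowSP_truncation hD hu)
        (by rw [Finset.card_erase_of_mem (hu.mem_s1 hD.1.1), hA]; rfl)
    have hdisj : Disjoint ((· ++ [s]) '' truncation D s) ((· ++ [t]) '' truncation D t) := by
      refine Set.disjoint_left.mpr ?_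
      rintro _ ⟨u, -, rfl⟩ ⟨v, -, h⟩
      have hlast := congrArg List.getLast? h
      simp only [List.getLast?_concat, Option.some.injEq] at hlast
      exact hst hlast.symm
    calc D.ncard
        = ((· ++ [s]) '' truncation D s ∪ (· ++ [t]) '' truncation D t).ncard :=
          congrArg Set.ncard (hD.2.eq_union_image_truncation hst hs ht)
      _ = 2 ^ (n + 1) := by
        rw [Set.ncard_union_eq hdisj (hfin.subset (Set.image_subset_iff.mpr fun _ h => h))
          (hfin.subset (Set.image_subset_iff.mpr fun _ h => h)),
          Set.ncard_image_of_injective _ (List.append_left_injective _),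
          Set.ncard_image_of_injective _ (List.append_left_injective _), hcard hs, hcard ht,
          pow_succ, mul_two]

theorem exists_head?_eq {n : ℕ} (hD : IsMaxArrowSP A D) (hA : A.card = n + 1)
    (hs : TerminalElt D s) : ∃ P ∈ D, P.head? = some s := by
  induction n generalizing A D s with
  | zero =>
    obtain ⟨l, hl, hls⟩ := hs
    obtain ⟨x, rfl⟩ := List.length_eq_one_iff.mp ((hD.1.1.1 l hl).length_eq.trans hA)
    exact ⟨[x], hl, hls⟩
  | succ n ih =>
    obtain ⟨t, hts, ht⟩ := hD.1.exists_ne_terminalElt (by omega) hs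
    obtain ⟨R, hR, hRs⟩ := ih (isMaxArrowSP_truncation hD ht)
      (by rw [Finset.card_erase_of_mem (ht.mem_s1 hD.1.1), hA]; rfl)
      (hD.terminalElt_truncation hts.symm hs ht)
    exact ⟨R ++ [t], hR, by simp [hRs]⟩

theorem exists_head?_getLast? (hD : IsMaxArrowSP A D) (hst : s ≠ t) (hs : TerminalElt D s)
    (ht : TerminalElt D t) : ∃ P ∈ D, P.head? = some s ∧ P.getLast? = some t := by
  obtain ⟨n, hn⟩ := Nat.exists_eq_add_one.mpr
    (Finset.card_pos.mpr ⟨s, Finset.mem_erase.mpr ⟨hst, hs.mem_s1 hD.1.1⟩⟩)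
  obtain ⟨R, hR, hRs⟩ :=
    (isMaxArrowSP_truncation hD ht).exists_head?_eq hn (hD.terminalElt_truncation hst hs ht)
  exact ⟨R ++ [t], hR, by simp [hRs], List.getLast?_concat⟩

end IsMaxArrowSP

end Domains

end

/-- A maximal Arrow's single-peaked domain on a set of size `m ≥ 2` contains exactly
`2^(m-1)` linear orders, among them two extremal orders, one starting at each of the
two terminal elements and ending at the other. -/
theorem stmt_1 {α : Type*} [DecidableEq α] (A : Finset α) (m : ℕ) (hm : A.card = m)
    (hm2 : 2 ≤ m) (D : Set (List α)) (hD : IsMaxArrowSP A D) :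
    D.ncard = 2 ^ (m - 1) ∧
    ∃ s t : α, s ≠ t ∧ TerminalElt D s ∧ TerminalElt D t ∧
      (∀ a : α, TerminalElt D a → a = s ∨ a = t) ∧
      (∃ P ∈ D, P.head? = some s ∧ P.getLast? = some t) ∧
      (∃ Q ∈ D, Q.head? = some t ∧ Q.getLast? = some s) := by
  obtain ⟨t, ht⟩ := hD.1.exists_terminalElt (Finset.card_pos.mp (by omega))
  obtain ⟨s, hst, hs⟩ := hD.1.exists_ne_terminalElt (by omega) ht
  exact ⟨hD.ncard_eq (by omega), s, t, hst, hs, ht,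
    fun _ => hD.2.eq_or_eq_of_terminalElt hst hs ht,
    hD.exists_head?_getLast? hst hs ht, hD.exists_head?_getLast? hst.symm ht hs⟩
end

section
/- There exist a set A of size 6, two linear orders P and Q on A, and two maximal Arrow's single-peaked domains D₁ and D₂ on A with D₁ ≠ D₂ such that P and Q are the two extremal orders of both D₁ and D₂, and D₁ is not isomorphic to D₂. (For instance A = {a,b,c,d,s,f}, P = (s,a,b,c,d,f), Q = (f,a,b,c,d,s).) -/
namespace IsLinOrd

variable {α : Type*} {A : Finset α} {l m : List α}

theorem perm_s3 (hl : IsLinOrd A l) (hm : IsLinOrd A m) : l.Perm m :=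
  (List.perm_ext_iff_of_nodup hl.1 hm.1).2 fun a => (hl.2 a).trans (hm.2 a).symm

theorem of_perm_s3 (hm : IsLinOrd A m) (h : l.Perm m) : IsLinOrd A l :=
  ⟨h.nodup_iff.2 hm.1, fun a => h.mem_iff.trans (hm.2 a)⟩

end IsLinOrd

theorem isLinOrd_finRange (n : ℕ) : IsLinOrd Finset.univ (List.finRange n) :=
  ⟨List.nodup_finRange n, fun a => by simp⟩

section Extremal

variable {α : Type*} {D : Set (List α)} {s t : α}

theorem isExtremal_iff_of_terminalElt (hst : s ≠ t) (hterm : ∀ a, TerminalElt D a ↔ a = s ∨ a = t)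
    {l : List α} :
    IsExtremal D l ↔ l ∈ D ∧
      (l.head? = some s ∧ l.getLast? = some t ∨ l.head? = some t ∧ l.getLast? = some s) := by
  constructor
  · rintro ⟨hl, x, y, hxy, hx, hy, hxT, hyT, -⟩
    refine ⟨hl, ?_⟩
    rcases (hterm x).1 hxT with rfl | rfl <;> rcases (hterm y).1 hyT with rfl | rfl
    exacts [absurd rfl hxy, Or.inl ⟨hx, hy⟩, Or.inr ⟨hx, hy⟩, absurd rfl hxy]
  · rintro ⟨hl, ⟨hx, hy⟩ | ⟨hx, hy⟩⟩
    · exact ⟨hl, s, t, hst, hx, hy, (hterm s).2 (.inl rfl), (hterm t).2 (.inr rfl),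
        fun a => (hterm a).1⟩
    · exact ⟨hl, t, s, hst.symm, hx, hy, (hterm t).2 (.inr rfl), (hterm s).2 (.inl rfl),
        fun a ha => ((hterm a).1 ha).symm⟩

theorem extremal_setOf_mem {L : List (List α)} {P Q : List α} (hst : s ≠ t)
    (hterm : ∀ a, (∃ l ∈ L, l.getLast? = some a) ↔ a = s ∨ a = t) (hP : P ∈ L) (hQ : Q ∈ L)
    (hPQ : ∀ l ∈ L, (l.head? = some s ∧ l.getLast? = some t ∨
      l.head? = some t ∧ l.getLast? = some s) ↔ l = P ∨ l = Q) :
    IsExtremal {l | l ∈ L} P ∧ IsExtremal {l | l ∈ L} Q ∧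
      ∀ l, IsExtremal {l | l ∈ L} l → l = P ∨ l = Q := by
  have hext := fun l => isExtremal_iff_of_terminalElt (D := {l | l ∈ L}) (l := l) hst hterm
  refine ⟨(hext P).2 ⟨hP, (hPQ P hP).2 (.inl rfl)⟩, (hext Q).2 ⟨hQ, (hPQ Q hQ).2 (.inr rfl)⟩,
    fun l hl => ?_⟩
  obtain ⟨hlL, h⟩ := (hext l).1 hl
  exact (hPQ l hlL).1 h

end Extremal

section CondorcetDomain

variable {α : Type*} [DecidableEq α] {A : Finset α} {D : Set (List α)}

theorem not_condorcetTriple_of_neverBottom (hlin : ∀ l ∈ D, IsLinOrd A l)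
    (hnb : ∀ T ⊆ A, T.card = 3 → ∃ x, NeverBottom D T x) : ¬ CondorcetTriple D := by
  rintro ⟨a, b, c, hab, hac, hbc, v₁, hv₁, v₂, hv₂, v₃, hv₃, r₁, r₂, r₃⟩
  have hA : {a, b, c} ⊆ A := by
    intro x hx
    have : x ∈ restrictList v₁ {a, b, c} := by rw [r₁]; simpa using hx
    exact ((hlin v₁ hv₁).2 x).1 (List.mem_of_mem_filter this)
  obtain ⟨x, hx, hbot⟩ := hnb _ hA (Finset.card_eq_three.2 ⟨a, b, c, hab, hac, hbc, rfl⟩)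
  simp only [Finset.mem_insert, Finset.mem_singleton] at hx
  rcases hx with rfl | rfl | rfl
  · exact hbot v₂ hv₂ (by rw [r₂]; rfl)
  · exact hbot v₃ hv₃ (by rw [r₃]; rfl)
  · exact hbot v₁ hv₁ (by rw [r₁]; rfl)

theorem IsArrowSP.of_neverBottom (hlin : ∀ l ∈ D, IsLinOrd A l)
    (hnb : ∀ T ⊆ A, T.card = 3 → ∃ x, NeverBottom D T x) : IsArrowSP A D :=
  ⟨⟨hlin, not_condorcetTriple_of_neverBottom hlin hnb⟩, hnb⟩

def CompletesCondorcetTriple (D : Set (List α)) (l : List α) : Prop :=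
  ∃ a b c : α, a ≠ b ∧ a ≠ c ∧ b ≠ c ∧
    (∃ v₁ ∈ D, restrictList v₁ {a, b, c} = [a, b, c]) ∧ restrictList l {a, b, c} = [b, c, a] ∧
      ∃ v₃ ∈ D, restrictList v₃ {a, b, c} = [c, a, b]

theorem IsCondorcetDomain.isMax_of_completes (hD : IsCondorcetDomain A D)
    (h : ∀ l, IsLinOrd A l → l ∉ D → CompletesCondorcetTriple D l) :
    IsMaxCondorcetDomain A D := by
  refine ⟨hD, fun D' hD' hsub => Set.Subset.antisymm (fun l hl => ?_) hsub⟩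
  by_contra hlD
  obtain ⟨a, b, c, hab, hac, hbc, ⟨v₁, hv₁, r₁⟩, r, v₃, hv₃, r₃⟩ := h l (hD'.1 l hl) hlD
  exact hD'.2 ⟨a, b, c, hab, hac, hbc, v₁, hsub hv₁, l, hl, v₃, hsub hv₃, r₁, r, r₃⟩

def cyclicPatterns (xs : List α) (L : List (List α)) : List (α × α × α) :=
  (xs ×ˢ xs ×ˢ xs).filter fun (a, b, c) => a ≠ b ∧ a ≠ c ∧ b ≠ c ∧
    (∃ v ∈ L, restrictList v {a, b, c} = [a, b, c]) ∧ ∃ v ∈ L, restrictList v {a, b, c} = [c, a, b]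

theorem completesCondorcetTriple_of_mem_cyclicPatterns {xs l : List α} {L : List (List α)}
    {t : α × α × α} (ht : t ∈ cyclicPatterns xs L)
    (hl : restrictList l {t.1, t.2.1, t.2.2} = [t.2.1, t.2.2, t.1]) :
    CompletesCondorcetTriple {l | l ∈ L} l := by
  obtain ⟨a, b, c⟩ := t
  obtain ⟨hab, hac, hbc, h₁, h₃⟩ := by simpa [cyclicPatterns] using (List.mem_filter.1 ht).2
  exact ⟨a, b, c, hab, hac, hbc, h₁, hl, h₃⟩

theorem isMaxArrowSP_setOf_mem {xs : List α} {L : List (List α)} (hxs : IsLinOrd A xs)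
    (hlin : ∀ l ∈ L, l.Perm xs)
    (hnb : ∀ T ⊆ A, T.card = 3 → ∃ x ∈ T, ∀ l ∈ L, (restrictList l T).getLast? ≠ some x)
    (hmax : ∀ p ∈ xs.permutations', p ∈ L ∨ ∃ t ∈ cyclicPatterns xs L,
      restrictList p {t.1, t.2.1, t.2.2} = [t.2.1, t.2.2, t.1]) :
    IsMaxArrowSP A {l | l ∈ L} := by
  have hSP : IsArrowSP A {l | l ∈ L} :=
    .of_neverBottom (fun l hl => hxs.of_perm_s3 (hlin l hl)) hnb
  refine ⟨hSP.1.isMax_of_completes fun l hl hlL => ?_, hSP⟩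
  obtain h | ⟨t, ht, hr⟩ := hmax l (List.mem_permutations'.2 (hl.perm_s3 hxs))
  exacts [absurd h hlL, completesCondorcetTriple_of_mem_cyclicPatterns ht hr]

end CondorcetDomain

section HeadCount

variable {α β : Type*}

noncomputable def headCount (D : Set (List α)) (x : α) : ℕ :=
  {l ∈ D | l.head? = some x}.ncard

theorem headCount_image_map {f : α → β} (hf : Function.Injective f) (D : Set (List α)) (x : α) :
    headCount ((fun l => l.map f) '' D) (f x) = headCount D x := by
  have : {l ∈ (fun l => l.map f) '' D | l.head? = some (f x)} =
      (fun l => l.map f) '' {l ∈ D | l.head? = some x} := by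
    ext l
    simp only [Set.mem_ofPred_eq, Set.mem_image]
    constructor
    · rintro ⟨⟨m, hm, rfl⟩, hhead⟩
      rw [List.head?_map, Option.map_eq_some_iff] at hhead
      obtain ⟨z, hz, hzx⟩ := hhead
      exact ⟨m, ⟨hm, hf hzx ▸ hz⟩, rfl⟩
    · rintro ⟨m, ⟨hm, hhead⟩, rfl⟩
      exact ⟨⟨m, hm, rfl⟩, by rw [List.head?_map, hhead, Option.map_some]⟩
  rw [headCount, this, Set.ncard_image_of_injective _ (List.map_injective_iff.2 hf), headCount]

theorem not_exists_map_eq_of_headCount {D₁ D₂ : Set (List α)} (y : α)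
    (h : ∀ x, headCount D₁ x ≠ headCount D₂ y) :
    ¬ ∃ φ : Equiv.Perm α, (fun l => l.map φ) '' D₁ = D₂ := by
  rintro ⟨φ, rfl⟩
  apply h (φ.symm y)
  rw [← headCount_image_map φ.injective, φ.apply_symm_apply]

theorem headCount_setOf_mem [DecidableEq α] {L : List (List α)} (hL : L.Nodup) (x : α) :
    headCount {l | l ∈ L} x = L.countP (fun l => l.head? = some x) := by
  have : {l ∈ {l | l ∈ L} | l.head? = some x} =
      ↑(L.filter (fun l => l.head? = some x)).toFinset := by
    ext; simp
  rw [headCount, this, Set.ncard_coe_finset, List.toFinset_card_of_nodup (hL.filter _),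
    List.countP_eq_length_filter]

end HeadCount

-- `a, b, c, d, s, f` are encoded as `0, …, 5`, so `P = (s, a, b, c, d, f)` is `[4, 0, 1, 2, 3, 5]`.
def domain₁ : List (List (Fin 6)) :=
  [[0, 1, 2, 3, 4, 5], [0, 1, 2, 3, 5, 4], [0, 1, 2, 4, 3, 5], [0, 1, 2, 5, 3, 4],
   [0, 1, 4, 2, 3, 5], [0, 1, 5, 2, 3, 4], [0, 4, 1, 2, 3, 5], [0, 5, 1, 2, 3, 4],
   [1, 0, 2, 3, 4, 5], [1, 0, 2, 3, 5, 4], [1, 0, 2, 4, 3, 5], [1, 0, 2, 5, 3, 4],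
   [1, 0, 4, 2, 3, 5], [1, 0, 5, 2, 3, 4], [1, 2, 0, 3, 4, 5], [1, 2, 0, 3, 5, 4],
   [1, 2, 0, 4, 3, 5], [1, 2, 0, 5, 3, 4], [1, 2, 3, 0, 4, 5], [1, 2, 3, 0, 5, 4],
   [2, 1, 0, 3, 4, 5], [2, 1, 0, 3, 5, 4], [2, 1, 0, 4, 3, 5], [2, 1, 0, 5, 3, 4],
   [2, 1, 3, 0, 4, 5], [2, 1, 3, 0, 5, 4], [2, 3, 1, 0, 4, 5], [2, 3, 1, 0, 5, 4],
   [3, 2, 1, 0, 4, 5], [3, 2, 1, 0, 5, 4], [4, 0, 1, 2, 3, 5], [5, 0, 1, 2, 3, 4]]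

def domain₂ : List (List (Fin 6)) :=
  [[0, 1, 2, 3, 4, 5], [0, 1, 2, 3, 5, 4], [0, 1, 2, 4, 3, 5], [0, 1, 2, 5, 3, 4],
   [0, 1, 4, 2, 3, 5], [0, 1, 5, 2, 3, 4], [0, 4, 1, 2, 3, 5], [0, 5, 1, 2, 3, 4],
   [1, 0, 2, 3, 4, 5], [1, 0, 2, 3, 5, 4], [1, 0, 2, 4, 3, 5], [1, 0, 2, 5, 3, 4],
   [1, 0, 4, 2, 3, 5], [1, 0, 5, 2, 3, 4], [1, 2, 0, 3, 4, 5], [1, 2, 0, 3, 5, 4],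
   [1, 2, 0, 4, 3, 5], [1, 2, 0, 5, 3, 4], [1, 2, 3, 0, 4, 5], [1, 2, 3, 0, 5, 4],
   [1, 3, 2, 0, 4, 5], [1, 3, 2, 0, 5, 4], [2, 1, 0, 3, 4, 5], [2, 1, 0, 3, 5, 4],
   [2, 1, 0, 4, 3, 5], [2, 1, 0, 5, 3, 4], [2, 1, 3, 0, 4, 5], [2, 1, 3, 0, 5, 4],
   [3, 1, 2, 0, 4, 5], [3, 1, 2, 0, 5, 4], [4, 0, 1, 2, 3, 5], [5, 0, 1, 2, 3, 4]]

set_option maxRecDepth 10000 in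
theorem isMaxArrowSP_domain₁ : IsMaxArrowSP Finset.univ {l | l ∈ domain₁} :=
  isMaxArrowSP_setOf_mem (isLinOrd_finRange 6) (by decide) (by decide) (by decide)

set_option maxRecDepth 10000 in
theorem isMaxArrowSP_domain₂ : IsMaxArrowSP Finset.univ {l | l ∈ domain₂} :=
  isMaxArrowSP_setOf_mem (isLinOrd_finRange 6) (by decide) (by decide) (by decide)

theorem extremal_domain₁ :
    IsExtremal {l | l ∈ domain₁} [4, 0, 1, 2, 3, 5] ∧
      IsExtremal {l | l ∈ domain₁} [5, 0, 1, 2, 3, 4] ∧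
      ∀ l, IsExtremal {l | l ∈ domain₁} l → l = [4, 0, 1, 2, 3, 5] ∨ l = [5, 0, 1, 2, 3, 4] :=
  extremal_setOf_mem (s := 4) (t := 5) (by decide) (by decide) (by decide) (by decide) (by decide)

theorem extremal_domain₂ :
    IsExtremal {l | l ∈ domain₂} [4, 0, 1, 2, 3, 5] ∧
      IsExtremal {l | l ∈ domain₂} [5, 0, 1, 2, 3, 4] ∧
      ∀ l, IsExtremal {l | l ∈ domain₂} l → l = [4, 0, 1, 2, 3, 5] ∨ l = [5, 0, 1, 2, 3, 4] :=
  extremal_setOf_mem (s := 4) (t := 5) (by decide) (by decide) (by decide) (by decide) (by decide)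

theorem not_exists_map_domain₁_eq_domain₂ :
    ¬ ∃ φ : Equiv.Perm (Fin 6), (fun l => l.map φ) '' {l | l ∈ domain₁} = {l | l ∈ domain₂} := by
  refine not_exists_map_eq_of_headCount 1 fun x => ?_
  rw [headCount_setOf_mem (by decide), headCount_setOf_mem (by decide)]
  revert x
  decide

/-- There exist, on a set of size 6, two distinct non-isomorphic maximal Arrow's
single-peaked domains sharing the same pair of extremal orders. -/
theorem stmt_3 :
    ∃ (P Q : List (Fin 6)) (D₁ D₂ : Set (List (Fin 6))),
      D₁ ≠ D₂ ∧ P ≠ Q ∧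
      IsMaxArrowSP Finset.univ D₁ ∧ IsMaxArrowSP Finset.univ D₂ ∧
      IsExtremal D₁ P ∧ IsExtremal D₁ Q ∧
      (∀ l : List (Fin 6), IsExtremal D₁ l → l = P ∨ l = Q) ∧
      IsExtremal D₂ P ∧ IsExtremal D₂ Q ∧
      (∀ l : List (Fin 6), IsExtremal D₂ l → l = P ∨ l = Q) ∧
      ¬ ∃ φ : Equiv.Perm (Fin 6), (fun l => l.map φ) '' D₁ = D₂ := by
  obtain ⟨ext₁P, ext₁Q, ext₁⟩ := extremal_domain₁
  obtain ⟨ext₂P, ext₂Q, ext₂⟩ := extremal_domain₂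
  have hne : {l | l ∈ domain₁} ≠ {l | l ∈ domain₂} := fun h =>
    not_exists_map_domain₁_eq_domain₂ ⟨1, by simp [h]⟩
  exact ⟨_, _, _, _, hne, by decide, isMaxArrowSP_domain₁, isMaxArrowSP_domain₂,
    ext₁P, ext₁Q, ext₁, ext₂P, ext₂Q, ext₂, not_exists_map_domain₁_eq_domain₂⟩
end

section
/- Let D be a maximal Arrow's single-peaked domain on a set A with inherited permutation θ_D. If D is self-paired, then θ_D has order 2 (θ_D² is the identity). -/
/-! A relabelling of the alternatives that maps `D` onto itself permutes its terminal elements and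
hence its extremal orders. So `θ` maps `Q = θ P` to an extremal order; it cannot be `Q = θ P`
itself, as `P ≠ Q`, hence `θ Q = P`. Thus `θ²` fixes `P`, which lists every alternative. -/

section Relabel

variable {α β : Type*} (e : α ≃ β) {D : Set (List α)}

theorem terminalElt_image_map_iff {a : α} :
    TerminalElt ((fun l : List α => l.map e) '' D) (e a) ↔ TerminalElt D a := by
  simp [TerminalElt, List.getLast?_map]

theorem IsExtremal.image_map {l : List α} (h : IsExtremal D l) :
    IsExtremal ((fun l : List α => l.map e) '' D) (l.map e) := by
  obtain ⟨hl, s, t, hst, hs, ht, hts, htt, hterm⟩ := h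
  refine ⟨Set.mem_image_of_mem _ hl, e s, e t, e.injective.ne hst, by simp [hs], by simp [ht],
    (terminalElt_image_map_iff e).2 hts, (terminalElt_image_map_iff e).2 htt, fun b hb => ?_⟩
  rw [← e.apply_symm_apply b, terminalElt_image_map_iff] at hb
  rcases hterm _ hb with h | h
  · exact Or.inl (by rw [← h, e.apply_symm_apply])
  · exact Or.inr (by rw [← h, e.apply_symm_apply])

end Relabel

theorem Equiv.Perm.eq_one_of_map_eq_self {α : Type*} {σ : Equiv.Perm α} {l : List α}
    (hl : ∀ a, a ∈ l) (h : l.map σ = l) : σ = 1 := by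
  have hfix := List.map_eq_map_iff.1 (h.trans (List.map_id l).symm)
  ext a
  exact hfix a (hl a)

/-- If a maximal Arrow's single-peaked domain `D`, with extremal orders `P` and
`Q = θ(P)` for the inherited permutation `θ`, is self-paired (`θ` maps `D` onto
itself), then `θ` has order two. -/
theorem stmt_12 {α : Type*} [Fintype α] [DecidableEq α] (D : Set (List α))
    (hD : IsMaxArrowSP (Finset.univ : Finset α) D) (P Q : List α) (hPQ : P ≠ Q)
    (eP : IsExtremal D P) (eQ : IsExtremal D Q)
    (hu : ∀ l : List α, IsExtremal D l → l = P ∨ l = Q)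
    (θ : Equiv.Perm α) (hθ : P.map θ = Q)
    (hsp : (fun l : List α => l.map θ) '' D = D) :
    θ ^ 2 = 1 := by
  have hθQ : IsExtremal D (Q.map θ) := hsp ▸ eQ.image_map θ
  have hθQP : Q.map θ = P := by
    refine (hu _ hθQ).resolve_right fun hQ => hPQ ?_
    exact List.map_injective_iff.2 θ.injective (hθ.trans hQ.symm)
  have hPall : ∀ a, a ∈ P := fun a => ((hD.1.1.1 P eP.1).2 a).2 (Finset.mem_univ a)
  refine Equiv.Perm.eq_one_of_map_eq_self hPall ?_
  rw [pow_two, Equiv.Perm.coe_mul, ← List.map_map, hθ, hθQP]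
end

section
/- Let D be a maximal Arrow's single-peaked domain on a set A with inherited permutation θ_D. Then D is self-paired if and only if for every 3-element subset T ⊆ A, whenever x is a never-bottom element of T for D, θ_D(x) is a never-bottom element of θ_D(T) for D. -/
theorem IsLinOrd.map_equiv {α β : Type*} [Fintype α] [Fintype β] {l : List α}
    (hl : IsLinOrd (Finset.univ : Finset α) l) (f : α ≃ β) :
    IsLinOrd (Finset.univ : Finset β) (l.map f) :=
  ⟨hl.1.map f.injective, fun b => by
    simpa using ⟨f.symm b, (hl.2 _).2 (Finset.mem_univ _), f.apply_symm_apply b⟩⟩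

section Relabel

variable {α β : Type*} [DecidableEq α] [DecidableEq β]

theorem restrictList_map_image {f : α → β} (hf : Function.Injective f) (l : List α)
    (S : Finset α) : restrictList (l.map f) (S.image f) = (restrictList l S).map f := by
  simp only [restrictList, List.filter_map]
  congr 2
  ext a
  simp [hf.eq_iff]

theorem NeverBottom.image_map {D : Set (List α)} {T : Finset α} {x : α}
    (h : NeverBottom D T x) {f : α → β} (hf : Function.Injective f) :
    NeverBottom ((fun l => l.map f) '' D) (T.image f) (f x) := by
  refine ⟨Finset.mem_image_of_mem f h.1, ?_⟩
  rintro _ ⟨l, hl, rfl⟩ hlast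
  rw [restrictList_map_image hf, List.getLast?_map, Option.map_eq_some_iff] at hlast
  obtain ⟨y, hy, hyx⟩ := hlast
  exact h.2 l hl (hf hyx ▸ hy)

end Relabel

section Condorcet

variable {α : Type*} [DecidableEq α]

theorem NeverBottom.union {D D' : Set (List α)} {T : Finset α} {x : α}
    (h : NeverBottom D T x) (h' : NeverBottom D' T x) : NeverBottom (D ∪ D') T x :=
  ⟨h.1, fun l hl => hl.elim (h.2 l) (h'.2 l)⟩

theorem not_condorcetTriple_of_neverBottom_s13 {D : Set (List α)}
    (h : ∀ T : Finset α, T.card = 3 → ∃ x, NeverBottom D T x) : ¬ CondorcetTriple D := by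
  rintro ⟨a, b, c, hab, hac, hbc, v₁, hv₁, v₂, hv₂, v₃, hv₃, r₁, r₂, r₃⟩
  obtain ⟨x, hxT, hx⟩ := h {a, b, c} (Finset.card_eq_three.2 ⟨a, b, c, hab, hac, hbc, rfl⟩)
  simp only [Finset.mem_insert, Finset.mem_singleton] at hxT
  -- a never-bottom `x` would be the bottom of one of `[a,b,c]`, `[b,c,a]`, `[c,a,b]`
  rcases hxT with rfl | rfl | rfl
  exacts [hx v₂ hv₂ (by rw [r₂]; rfl), hx v₃ hv₃ (by rw [r₃]; rfl), hx v₁ hv₁ (by rw [r₁]; rfl)]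

theorem IsMaxCondorcetDomain.subset_of_union {A : Finset α} {D D' : Set (List α)}
    (hD : IsMaxCondorcetDomain A D) (h : IsCondorcetDomain A (D ∪ D')) : D' ⊆ D := by
  rw [← hD.2 _ h Set.subset_union_left]
  exact Set.subset_union_right

end Condorcet

theorem Set.MapsTo.image_eq_of_iterate_eq_id {β : Type*} {f : β → β} {s : Set β}
    (h : Set.MapsTo f s s) {n : ℕ} (hn : n ≠ 0) (hf : f^[n] = id) : f '' s = s := by
  refine h.image_subset.antisymm fun x hx => ?_
  obtain ⟨m, rfl⟩ := Nat.exists_eq_succ_of_ne_zero hn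
  refine ⟨f^[m] x, h.iterate m hx, ?_⟩
  rw [← Function.iterate_succ_apply' f m x, hf, id]

theorem List.map_perm_iterate {α : Type*} (σ : Equiv.Perm α) (n : ℕ) :
    (List.map σ)^[n] = List.map ⇑(σ ^ n) := by
  induction n with
  | zero => funext l; simp
  | succ n ih =>
    funext l
    rw [Function.iterate_succ_apply', ih, List.map_map, pow_succ', Equiv.Perm.coe_mul]

theorem stmt_13_general {α : Type*} [Fintype α] [DecidableEq α] (D : Set (List α))
    (hD : IsMaxArrowSP (Finset.univ : Finset α) D)
    (θ : Equiv.Perm α) :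
    (fun l : List α => l.map θ) '' D = D ↔
      ∀ T : Finset α, T.card = 3 → ∀ x : α, NeverBottom D T x →
        NeverBottom D (T.image θ) (θ x) := by
  obtain ⟨hmax, ⟨hlin, -⟩, hSP⟩ := hD
  refine ⟨fun hself T _ x hx => hself ▸ hx.image_map θ.injective, fun H => ?_⟩
  have hnb : ∀ T : Finset α, T.card = 3 →
      ∃ y, NeverBottom (D ∪ (fun l : List α => l.map θ) '' D) T y := by
    intro T hT
    have hTθ : (T.image θ.symm).image θ = T := by simp [Finset.image_image]
    have hcard : (T.image θ.symm).card = 3 := by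
      rwa [Finset.card_image_of_injective _ θ.symm.injective]
    obtain ⟨x, hx⟩ := hSP _ (Finset.subset_univ _) hcard
    have h₁ := H _ hcard x hx
    have h₂ := hx.image_map θ.injective
    rw [hTθ] at h₁ h₂
    exact ⟨θ x, h₁.union h₂⟩
  have hcd : IsCondorcetDomain Finset.univ (D ∪ (fun l : List α => l.map θ) '' D) :=
    ⟨by rintro l (hl | ⟨m, hm, rfl⟩); exacts [hlin l hl, (hlin m hm).map_equiv θ],
      not_condorcetTriple_of_neverBottom_s13 hnb⟩
  refine Set.MapsTo.image_eq_of_iterate_eq_id (fun l hl => hmax.subset_of_union hcd ⟨l, hl, rfl⟩)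
    (orderOf_pos θ).ne' ?_
  rw [List.map_perm_iterate, pow_orderOf_eq_one, Equiv.Perm.coe_one, List.map_id_fun]

/-- A maximal Arrow's single-peaked domain `D` with inherited permutation `θ` is
self-paired iff for every triple `T`, whenever `x` is a never-bottom element of `T`
for `D`, `θ(x)` is a never-bottom element of `θ(T)` for `D`. -/
theorem stmt_13 {α : Type*} [Fintype α] [DecidableEq α] (D : Set (List α))
    (hD : IsMaxArrowSP (Finset.univ : Finset α) D) (P Q : List α) (hPQ : P ≠ Q)
    (eP : IsExtremal D P) (eQ : IsExtremal D Q)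
    (hu : ∀ l : List α, IsExtremal D l → l = P ∨ l = Q)
    (θ : Equiv.Perm α) (hθ : P.map θ = Q) :
    (fun l : List α => l.map θ) '' D = D ↔
      ∀ T : Finset α, T.card = 3 → ∀ x : α, NeverBottom D T x →
        NeverBottom D (T.image θ) (θ x) :=
  stmt_13_general D hD θ
end
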